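/- Let P be a potential graph with barrier digraph V, let S ⊊ N with T_S ≠ ∅, and let (a,b) be an edge of P with a ∈ S, b ∉ S realizing p_{ab} = min { p_{qr} : q ∈ S, r ∉ S, (q,r) an edge of P }. Then λ°_S = λ^{•a}_S + v_{ab}. -/

import Mathlib

/-!
The barrier weight of an entering tree on `S` rooted at `q` is the `p`-weight of its underlying
undirected tree minus `∑_{i ∈ S \ {q}} p i i`, and every undirected tree on `S` can be oriented
toward any root. Hence rerooting from `q` to `a` adds `p a a - p q q` to the weight, so a tree
of `𝓣^∘_S` whose outgoing arc is `(q, r)` weighs at least `λ^{•a}_S - p a a + p q r`, which is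
`≥ λ^{•a}_S + v a b` by the minimality of `p a b`. Conversely, appending `(a, b)` to an optimal
tree rooted at `a` gives a tree of `𝓣^∘_S` of weight `λ^{•a}_S + v a b`.
-/

open scoped Classical

namespace BarrierForests

variable {α : Type*} [Fintype α] [DecidableEq α]

/-- Total weight of a set of arcs. -/
def aweight (v : α → α → ℝ) (A : Finset (α × α)) : ℝ := ∑ a ∈ A, v a.1 a.2

/-- Weight `Υ^A_S` of the arcs of `A` whose tail lies in `S`. -/
def aweightOn (v : α → α → ℝ) (A : Finset (α × α)) (S : Finset α) : ℝ :=
  ∑ a ∈ A.filter (fun a => a.1 ∈ S), v a.1 a.2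

/-- The relation "there is an arc from `i` to `j` in `A`". -/
def arcRel (A : Finset (α × α)) : α → α → Prop := fun i j => (i, j) ∈ A

/-- Entering forest: every vertex has out-degree at most one, and there are no
directed cycles. -/
def IsEForest (A : Finset (α × α)) : Prop :=
  (∀ i j j', (i, j) ∈ A → (i, j') ∈ A → j = j') ∧
  ∀ i, ¬ Relation.TransGen (arcRel A) i i

/-- Roots of a (spanning) entering forest: the vertices with no outgoing arc. -/
noncomputable def rootSet (A : Finset (α × α)) : Finset α :=
  Finset.univ.filter fun i => ∀ j, (i, j) ∉ A

/-- `𝓕^k`: spanning entering forests of the digraph with arc set `E`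
having exactly `k` trees (equivalently, `k` roots). -/
def FSet (E : Finset (α × α)) (k : ℕ) : Set (Finset (α × α)) :=
  {A | A ⊆ E ∧ IsEForest A ∧ (rootSet A).card = k}

/-- The infimum (in `EReal`, so `⊤` for the empty family) of the `w`-weights of the
members of `s`. -/
noncomputable def minW {β : Type*} (s : Set β) (w : β → ℝ) : EReal :=
  sInf ((fun x => (w x : EReal)) '' s)

/-- `φ^k`: minimum weight of a spanning entering forest with `k` trees. -/
noncomputable def phi (v : α → α → ℝ) (E : Finset (α × α)) (k : ℕ) : EReal :=
  minW (FSet E k) (aweight v)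

/-- `F ∈ 𝓕̃^k`: minimal spanning entering forest with `k` trees. -/
def IsMinForest (v : α → α → ℝ) (E : Finset (α × α)) (k : ℕ) (F : Finset (α × α)) : Prop :=
  F ∈ FSet E k ∧ (aweight v F : EReal) = phi v E k

/-- Vertex set of the tree `T^F_i` of the entering forest `F` rooted at `i`:
all vertices from which `i` is reachable. -/
noncomputable def treeVerts (F : Finset (α × α)) (i : α) : Finset α :=
  Finset.univ.filter fun j => Relation.ReflTransGen (arcRel F) j i

/-- Arc set of the tree `T^F_i`. -/
noncomputable def treeArcs (F : Finset (α × α)) (i : α) : Finset (α × α) :=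
  F.filter fun a => a.1 ∈ treeVerts F i

/-- Induced subgraph (restriction) of the arc set `A` on the vertex set `S`. -/
def restrictArcs (A : Finset (α × α)) (S : Finset α) : Finset (α × α) :=
  A.filter fun a => a.1 ∈ S ∧ a.2 ∈ S

/-- `T ∈ 𝓣^{•q}_S`: `T` is an entering tree that is a subgraph of the digraph with
arc set `E`, with vertex set `S` and root `q`. -/
def IsTreeOn (E T : Finset (α × α)) (S : Finset α) (q : α) : Prop :=
  q ∈ S ∧ T ⊆ E ∧ (∀ a ∈ T, a.1 ∈ S ∧ a.2 ∈ S) ∧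
  (∀ i ∈ S, i ≠ q → ∃! j, (i, j) ∈ T) ∧
  (∀ j, (q, j) ∉ T) ∧
  ∀ i ∈ S, Relation.ReflTransGen (arcRel T) i q

/-- `λ^{•q}_S`. -/
noncomputable def lamB (v : α → α → ℝ) (E : Finset (α × α)) (S : Finset α) (q : α) : EReal :=
  minW {T | IsTreeOn E T S q} (aweight v)

/-- `λ^•_S = min_{q ∈ S} λ^{•q}_S`. -/
noncomputable def lamBul (v : α → α → ℝ) (E : Finset (α × α)) (S : Finset α) : EReal :=
  minW {T | ∃ q ∈ S, IsTreeOn E T S q} (aweight v)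

/-- `T ∈ 𝓣^{∘q}_S`: `T` has `|S| + 1` vertices, `T|_S` is an entering tree with vertex
set `S` and root `q`, and the single arc of `T` leaving `S` goes from `q` to the root
`r ∉ S` of `T`. -/
def IsCTreeOn (E T : Finset (α × α)) (S : Finset α) (q : α) : Prop :=
  ∃ r, r ∉ S ∧ ∃ T', IsTreeOn E T' S q ∧ (q, r) ∈ E ∧ T = insert (q, r) T'

/-- `λ^{∘q}_S`. -/
noncomputable def lamC (v : α → α → ℝ) (E : Finset (α × α)) (S : Finset α) (q : α) : EReal :=
  minW {T | IsCTreeOn E T S q} (aweight v)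

/-- `λ^∘_S = min_{q ∈ S} λ^{∘q}_S`. -/
noncomputable def lamCirc (v : α → α → ℝ) (E : Finset (α × α)) (S : Finset α) : EReal :=
  minW {T | ∃ q ∈ S, IsCTreeOn E T S q} (aweight v)

/-- `μ^∘_S`: minimum of `Υ^F_S` over the spanning entering forests `F ∈ 𝓕^∘_S`,
i.e. those in which every vertex of `S` has an outgoing arc. -/
noncomputable def muCirc (v : α → α → ℝ) (E : Finset (α × α)) (S : Finset α) : EReal :=
  minW {A | A ⊆ E ∧ IsEForest A ∧ ∀ i ∈ S, ∃ j, (i, j) ∈ A} fun A => aweightOn v A S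

/-- `G ∈ 𝓡^F_y`: `G` is a descendant of `F` at the root `y`, i.e. `y` is a root of
`F`, the roots of `G` are those of `F` except `y`, `G` induces `T^F_q` on the vertex
set of every tree of `F` other than `T^F_y`, and `G` induces a tree on the vertex set
of `T^F_y`. -/
def IsDescendant (E F G : Finset (α × α)) (y : α) : Prop :=
  y ∈ rootSet F ∧ rootSet G = rootSet F \ {y} ∧
  (∀ q ∈ rootSet G, restrictArcs G (treeVerts F q) = treeArcs F q) ∧
  ∃ a ∈ treeVerts F y, IsTreeOn E (restrictArcs G (treeVerts F y)) (treeVerts F y) a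

/-- A potential graph: a connected weighted undirected graph with a loop at every
vertex.  Edges are recorded as a symmetric reflexive set of ordered pairs, with a
symmetric weight function `p`. -/
structure PotGraph (α : Type*) [Fintype α] [DecidableEq α] where
  p : α → α → ℝ
  edges : Finset (α × α)
  symm_mem : ∀ i j, (i, j) ∈ edges → (j, i) ∈ edges
  loop_mem : ∀ i, (i, i) ∈ edges
  symm_w : ∀ i j, p i j = p j i
  connected : ∀ i j : α, Relation.ReflTransGen (fun a b => (a, b) ∈ edges ∧ a ≠ b) i j

/-- Arc set of the barrier digraph of the potential graph `P`: an arc `(i,j)`, `i ≠ j`,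
for each non-loop edge of `P`. -/
def barcs (P : PotGraph α) : Finset (α × α) := P.edges.filter fun a => a.1 ≠ a.2

/-- Arc weights of the barrier digraph: `v i j = p i j - p i i`. -/
def bw (P : PotGraph α) : α → α → ℝ := fun i j => P.p i j - P.p i i

/-- Weight of a set of undirected edges of `P`. -/
noncomputable def uweight (P : PotGraph α) (T : Finset (Sym2 α)) : ℝ :=
  ∑ e ∈ T, Sym2.lift ⟨P.p, P.symm_w⟩ e

/-- `T ∈ 𝓣_S`: `T` is an undirected tree that is a subgraph of `P` (loops unused)
with vertex set `S`: its edges are non-loop edges of `P` joining vertices of `S`,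
it is connected on `S`, and it has `|S| - 1` edges. -/
def IsUTreeOn (P : PotGraph α) (T : Finset (Sym2 α)) (S : Finset α) : Prop :=
  (∀ e ∈ T, ∃ i j, i ≠ j ∧ e = s(i, j) ∧ (i, j) ∈ P.edges ∧ i ∈ S ∧ j ∈ S) ∧
  (∀ i ∈ S, ∀ j ∈ S, Relation.ReflTransGen (fun a b => s(a, b) ∈ T) i j) ∧
  T.card + 1 = S.card

/-- `ν_S`: minimum weight of an undirected tree on `S` that is a subgraph of `P`. -/
noncomputable def nu (P : PotGraph α) (S : Finset α) : EReal :=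
  minW {T | IsUTreeOn P T S} (uweight P)

/-- The underlying undirected edge set of a set of arcs. -/
def undir (A : Finset (α × α)) : Finset (Sym2 α) := A.image fun a => s(a.1, a.2)

/-- `Tq` is the entering tree (with root `q`, vertex set `S`, subgraph of the barrier
digraph of `P`) corresponding to the undirected tree `T`: it is obtained from `T` by
directing all edges toward `q` and replacing the weight of each arc `(i,j)` by
`v i j = p i j - p i i`. -/
def Corresponds (P : PotGraph α) (Tq : Finset (α × α)) (T : Finset (Sym2 α))
    (S : Finset α) (q : α) : Prop :=
  IsTreeOn (barcs P) Tq S q ∧ undir Tq = T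

section minW

variable {β : Type*} {s : Set β} {w : β → ℝ}

lemma minW_le {x : β} (hx : x ∈ s) : minW s w ≤ (w x : EReal) :=
  sInf_le ⟨x, hx, rfl⟩

lemma le_minW {m : EReal} (h : ∀ x ∈ s, m ≤ (w x : EReal)) : m ≤ minW s w :=
  le_sInf (by rintro _ ⟨x, hx, rfl⟩; exact h x hx)

/-- `minW ∅ w = ⊤` absorbs `c`; otherwise the minimum is attained. -/
lemma le_minW_add_coe [Finite β] {m : EReal} {c : ℝ} (h : ∀ x ∈ s, m ≤ ((w x + c : ℝ) : EReal)) :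
    m ≤ minW s w + c := by
  rcases s.eq_empty_or_nonempty with rfl | hs
  · simp [minW]
  · obtain ⟨x, hx, hmin⟩ :=
      (hs.image fun x => (w x : EReal)).csInf_mem ((Set.toFinite s).image _)
    rw [minW, ← hmin, ← EReal.coe_add]
    exact h x hx

end minW

def chainTo {γ : Type*} (R : γ → γ → Prop) (q : γ) : ℕ → γ → Prop
  | 0, i => i = q
  | n + 1, i => ∃ j, R i j ∧ chainTo R q n j

lemma exists_chainTo_of_reflTransGen {γ : Type*} {R : γ → γ → Prop} {q i : γ}
    (h : Relation.ReflTransGen R i q) : ∃ n, chainTo R q n i := by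
  induction h using Relation.ReflTransGen.head_induction_on with
  | refl => exact ⟨0, rfl⟩
  | head hij _ ih => obtain ⟨n, hn⟩ := ih; exact ⟨n + 1, _, hij, hn⟩

/-- The length of a shortest chain to `q` strictly decreases along a suitable first step. -/
lemma exists_rank_descent {γ : Type*} (R : γ → γ → Prop) (q : γ) :
    ∃ d : γ → ℕ, ∀ i, Relation.ReflTransGen R i q → i ≠ q → ∃ j, R i j ∧ d j < d i := by
  refine ⟨fun i => if h : ∃ n, chainTo R q n i then Nat.find h else 0, fun i hi hiq => ?_⟩
  have hex := exists_chainTo_of_reflTransGen hi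
  obtain ⟨m, hm⟩ : ∃ m, Nat.find hex = m + 1 := by
    refine Nat.exists_eq_add_one.mpr (Nat.pos_of_ne_zero fun h0 => hiq ?_)
    have := Nat.find_spec hex
    rwa [h0] at this
  obtain ⟨j, hij, hj⟩ : chainTo R q (m + 1) i := hm ▸ Nat.find_spec hex
  refine ⟨j, hij, ?_⟩
  simp only [dif_pos hex, dif_pos (⟨m, hj⟩ : ∃ n, chainTo R q n j), hm]
  exact Nat.lt_succ_of_le (Nat.find_min' _ hj)

section EnteringTree

omit [Fintype α]

lemma isTreeOn_image_parent {E : Finset (α × α)} {S : Finset α} {q : α} (hq : q ∈ S)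
    (f : α → α) (d : α → ℕ) (hf : ∀ i ∈ S, i ≠ q → (i, f i) ∈ E ∧ f i ∈ S ∧ d (f i) < d i) :
    IsTreeOn E ((S.erase q).image fun i => (i, f i)) S q := by
  have hmem : ∀ i j, (i, j) ∈ (S.erase q).image (fun i => (i, f i)) ↔
      i ≠ q ∧ i ∈ S ∧ j = f i := by
    simp [eq_comm, and_assoc]
  have hreach : ∀ n, ∀ i ∈ S, d i < n →
      Relation.ReflTransGen (arcRel ((S.erase q).image fun i => (i, f i))) i q := by
    intro n
    induction n with
    | zero => intro i _ h; omega
    | succ n ih =>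
      intro i hi hdi
      by_cases hiq : i = q
      · exact hiq ▸ Relation.ReflTransGen.refl
      · obtain ⟨-, hfi, hlt⟩ := hf i hi hiq
        exact Relation.ReflTransGen.head ((hmem i (f i)).mpr ⟨hiq, hi, rfl⟩)
          (ih (f i) hfi (by omega))
  refine ⟨hq, ?_, ?_, ?_, ?_, fun i hi => hreach _ i hi (Nat.lt_succ_self _)⟩
  · rintro ⟨i, j⟩ hij
    obtain ⟨hiq, hi, rfl⟩ := (hmem i j).mp hij
    exact (hf i hi hiq).1
  · rintro ⟨i, j⟩ hij
    obtain ⟨hiq, hi, rfl⟩ := (hmem i j).mp hij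
    exact ⟨hi, (hf i hi hiq).2.1⟩
  · exact fun i hi hiq => ⟨f i, (hmem i (f i)).mpr ⟨hiq, hi, rfl⟩, fun j hj => ((hmem i j).mp hj).2.2⟩
  · exact fun j hj => ((hmem q j).mp hj).1 rfl

namespace IsTreeOn

variable {E T : Finset (α × α)} {S : Finset α} {q : α}

omit [DecidableEq α] in
lemma not_transGen_self (h : IsTreeOn E T S q) {i : α} (hi : i ∈ S) :
    ¬ Relation.TransGen (arcRel T) i i := by
  obtain ⟨-, -, hends, hout, hroot, hreach⟩ := h
  have hiq := hreach i hi
  clear hreach hi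
  induction hiq using Relation.ReflTransGen.head_induction_on with
  | refl =>
    intro hc
    obtain ⟨k, hk, -⟩ := Relation.TransGen.head'_iff.mp hc
    exact hroot k hk
  | @head x y hxy _ ih =>
    intro hc
    obtain ⟨c, hxc, hcx⟩ := Relation.TransGen.head'_iff.mp hc
    have hxq : x ≠ q := by rintro rfl; exact hroot _ hxy
    obtain rfl : c = y := (hout x (hends _ hxy).1 hxq).unique hxc hxy
    exact ih (Relation.TransGen.tail' hcx hxy)

lemma sum_fst {M : Type*} [AddCommMonoid M] (h : IsTreeOn E T S q) (f : α → M) :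
    ∑ x ∈ T, f x.1 = ∑ i ∈ S.erase q, f i := by
  obtain ⟨-, -, hends, hout, hroot, -⟩ := h
  have hfst : ∀ x ∈ T, x.1 ∈ S.erase q := fun x hx =>
    Finset.mem_erase.mpr ⟨fun hq => hroot x.2 (hq ▸ hx), (hends x hx).1⟩
  refine Finset.sum_bij (fun x _ => x.1) hfst ?_ ?_ fun _ _ => rfl
  · rintro ⟨i, j⟩ hij ⟨i', j'⟩ hij' (rfl : i = i')
    obtain ⟨hiq, hi⟩ := Finset.mem_erase.mp (hfst _ hij)
    rw [(hout i hi hiq).unique hij hij']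
  · intro i hi
    obtain ⟨hiq, hi⟩ := Finset.mem_erase.mp hi
    obtain ⟨j, hj, -⟩ := hout i hi hiq
    exact ⟨(i, j), hj, rfl⟩

lemma card_eq (h : IsTreeOn E T S q) : T.card + 1 = S.card := by
  rw [Finset.card_eq_sum_ones, h.sum_fst fun _ => 1, ← Finset.card_eq_sum_ones,
    Finset.card_erase_add_one h.1]

lemma injOn_undir (h : IsTreeOn E T S q) : Set.InjOn (fun x : α × α => s(x.1, x.2)) ↑T := by
  rintro ⟨i, j⟩ hij ⟨i', j'⟩ hij' heq
  rcases Sym2.eq_iff.mp heq with ⟨rfl, rfl⟩ | ⟨rfl, rfl⟩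
  · rfl
  · by_cases hii : i = j
    · rw [hii]
    · exact absurd (Relation.TransGen.head hij (Relation.TransGen.single hij'))
        (h.not_transGen_self (h.2.2.1 _ hij).1)

lemma aweight_insert {r : α} (h : IsTreeOn E T S q) (hr : r ∉ S) (v : α → α → ℝ) :
    aweight v (insert (q, r) T) = aweight v T + v q r := by
  rw [aweight, Finset.sum_insert fun hqr => hr (h.2.2.1 _ hqr).2, aweight, add_comm]

end IsTreeOn

end EnteringTree

namespace IsTreeOn

variable {E T : Finset (α × α)} {S : Finset α} {q : α}

lemma aweight_eq (P : PotGraph α) (h : IsTreeOn (barcs P) T S q) :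
    aweight (bw P) T = uweight P (undir T) - ∑ i ∈ S.erase q, P.p i i := by
  rw [uweight, undir, Finset.sum_image h.injOn_undir, ← h.sum_fst, aweight,
    ← Finset.sum_sub_distrib]
  rfl

lemma isUTreeOn_undir (P : PotGraph α) (h : IsTreeOn (barcs P) T S q) :
    IsUTreeOn P (undir T) S := by
  have hinj := h.injOn_undir
  have hcard := h.card_eq
  obtain ⟨-, hE, hends, -, -, hreach⟩ := h
  refine ⟨?_, fun i hi j hj => ?_, ?_⟩
  · rintro _ hx
    obtain ⟨⟨i, j⟩, hij, rfl⟩ := Finset.mem_image.mp hx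
    obtain ⟨hP, hne⟩ := Finset.mem_filter.mp (hE hij)
    exact ⟨i, j, hne, rfl, hP, hends _ hij⟩
  · have : Std.Symm fun a b => s(a, b) ∈ undir T := ⟨fun a b hab => by rwa [Sym2.eq_swap]⟩
    have hup : ∀ x ∈ S, Relation.ReflTransGen (fun a b => s(a, b) ∈ undir T) x q := fun x hx =>
      Relation.ReflTransGen.mono (fun a b hab => Finset.mem_image.mpr ⟨(a, b), hab, rfl⟩)
        _ _ (hreach x hx)
    exact (hup i hi).trans (Std.Symm.symm _ _ (hup j hj))
  · rw [undir, Finset.card_image_of_injOn hinj, hcard]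

end IsTreeOn

/-- Orient every edge of the tree toward `q`, from each vertex to a neighbour closer to `q`. -/
lemma IsUTreeOn.exists_isTreeOn (P : PotGraph α) {T : Finset (Sym2 α)} {S : Finset α}
    (h : IsUTreeOn P T S) {q : α} (hq : q ∈ S) :
    ∃ Tq, IsTreeOn (barcs P) Tq S q ∧ undir Tq = T := by
  obtain ⟨hedges, hconn, hcard⟩ := h
  have hadj : ∀ i j, s(i, j) ∈ T → (i, j) ∈ barcs P ∧ j ∈ S := by
    intro i j hij
    obtain ⟨i', j', hne, heq, hP, hi', hj'⟩ := hedges _ hij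
    rcases Sym2.eq_iff.mp heq with ⟨rfl, rfl⟩ | ⟨rfl, rfl⟩
    · exact ⟨Finset.mem_filter.mpr ⟨hP, hne⟩, hj'⟩
    · exact ⟨Finset.mem_filter.mpr ⟨P.symm_mem _ _ hP, hne.symm⟩, hi'⟩
  obtain ⟨d, hd⟩ := exists_rank_descent (fun i j => s(i, j) ∈ T) q
  choose! f hfT hfd using fun i (hi : i ∈ S) (hiq : i ≠ q) => hd i (hconn i hi q hq) hiq
  have hTq := isTreeOn_image_parent hq f d fun i hi hiq =>
    ⟨(hadj _ _ (hfT i hi hiq)).1, (hadj _ _ (hfT i hi hiq)).2, hfd i hi hiq⟩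
  refine ⟨_, hTq, Finset.eq_of_subset_of_card_le ?_ ?_⟩
  · intro e he
    obtain ⟨_, hx, rfl⟩ := Finset.mem_image.mp he
    obtain ⟨i, hi, rfl⟩ := Finset.mem_image.mp hx
    obtain ⟨hiq, hi⟩ := Finset.mem_erase.mp hi
    exact hfT i hi hiq
  · have := (hTq.isUTreeOn_undir P).2.2
    omega

/-- Both orientations have the same underlying undirected tree, so only the loop weights of
the two roots differ. -/
lemma IsTreeOn.exists_reroot (P : PotGraph α) {T : Finset (α × α)} {S : Finset α} {q : α}
    (h : IsTreeOn (barcs P) T S q) {a : α} (ha : a ∈ S) :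
    ∃ Ta, IsTreeOn (barcs P) Ta S a ∧
      aweight (bw P) Ta - P.p a a = aweight (bw P) T - P.p q q := by
  obtain ⟨Ta, hTa, hundir⟩ := (h.isUTreeOn_undir P).exists_isTreeOn P ha
  refine ⟨Ta, hTa, ?_⟩
  rw [hTa.aweight_eq P, h.aweight_eq P, hundir, Finset.sum_erase_eq_sub ha,
    Finset.sum_erase_eq_sub h.1]
  ring

theorem statement14_general (P : PotGraph α) (S : Finset α)
    (a b : α) (ha : a ∈ S) (hb : b ∉ S) (hab : (a, b) ∈ P.edges)
    (hmin : ∀ q ∈ S, ∀ r, r ∉ S → (q, r) ∈ P.edges → P.p a b ≤ P.p q r) :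
    lamCirc (bw P) (barcs P) S = lamB (bw P) (barcs P) S a + ((bw P a b : ℝ) : EReal) := by
  have hab' : (a, b) ∈ barcs P := Finset.mem_filter.mpr ⟨hab, fun h : a = b => hb (h ▸ ha)⟩
  refine le_antisymm (le_minW_add_coe fun Ta hTa => ?_) (le_minW ?_)
  · rw [← hTa.aweight_insert hb]
    exact minW_le ⟨a, ha, b, hb, Ta, hTa, hab', rfl⟩
  · rintro _ ⟨q, hq, r, hr, T, hT, hqr, rfl⟩
    obtain ⟨Ta, hTa, hweight⟩ := hT.exists_reroot P ha
    have hle : aweight (bw P) Ta + bw P a b ≤ aweight (bw P) (insert (q, r) T) := by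
      rw [hT.aweight_insert hr]
      have := hmin q hq r hr (Finset.mem_filter.mp hqr).1
      simp only [bw]
      linarith
    calc lamB (bw P) (barcs P) S a + ((bw P a b : ℝ) : EReal)
        ≤ (aweight (bw P) Ta : EReal) + (bw P a b : EReal) :=
          add_le_add_left (minW_le (s := {T | IsTreeOn (barcs P) T S a}) hTa) _
      _ ≤ _ := by exact_mod_cast hle

/-- Assertion 7.  If `S ⊊ N`, `𝓣_S ≠ ∅`, and `(a,b)` is an edge of
`P` with `a ∈ S`, `b ∉ S` realizing the minimum of `p q r` over edges from `S` to its
complement, then `λ^∘_S = λ^{•a}_S + v a b`. -/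
theorem statement14 (P : PotGraph α) (S : Finset α) (hS : S ⊂ Finset.univ)
    (hne : ∃ T, IsUTreeOn P T S)
    (a b : α) (ha : a ∈ S) (hb : b ∉ S) (hab : (a, b) ∈ P.edges)
    (hmin : ∀ q ∈ S, ∀ r, r ∉ S → (q, r) ∈ P.edges → P.p a b ≤ P.p q r) :
    lamCirc (bw P) (barcs P) S = lamB (bw P) (barcs P) S a + ((bw P a b : ℝ) : EReal) :=
  statement14_general P S a b ha hb hab hmin

end BarrierForests
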